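/- arXiv:2508.00538 — 2 statements merged into one kernel-verified Lean document; each statement's English description precedes it below -/
import Mathlib

section
/- Let α ∈ [0,1) have dyadic expansion α = Σ_k 2^{-n_k}, where n_1 < n_2 < ... is the (finite or infinite) increasing sequence of positions of nonzero dyadic digits of α, and let O denote the set of odd natural numbers. Then the set B_α = ⋃_k 2^{n_k - 1} O is Buck measurable and μ(B_α) = Σ_k 2^{-n_k} = α. -/
open scoped BigOperators

/-- Buck's measure density: the infimum of `∑ 1/mᵢ` over finite covers of `S`
by arithmetic progressions `{n | n ≡ rᵢ [MOD mᵢ]}`. -/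
noncomputable def buckDensity (S : Set ℕ) : ℝ :=
  sInf {x : ℝ | ∃ (k : ℕ) (r m : Fin k → ℕ), (∀ i, 0 < m i) ∧
    (S ⊆ ⋃ i, {n : ℕ | n ≡ r i [MOD m i]}) ∧ x = ∑ i, (1 : ℝ) / (m i)}

/-- A set is Buck measurable if `μ*(S) + μ*(ℕ \ S) = 1`. -/
def BuckMeasurable (S : Set ℕ) : Prop :=
  buckDensity S + buckDensity Sᶜ = 1

/-- `R(S : m)`: the number of residue classes modulo `m` occupied by `S`. -/
noncomputable def residueCount (S : Set ℕ) (m : ℕ) : ℕ :=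
  ((fun s => s % m) '' S).ncard

/-!
A finite family of progressions `rᵢ + (mᵢ)` covering `ℕ` covers each of the `M = ∏ mᵢ` points
of `[0, M)`, while `rᵢ + (mᵢ)` contains only `M / mᵢ` of them; hence `∑ 1/mᵢ ≥ 1`, and so
`μ*(S) + μ*(Sᶜ) ≥ 1` for every `S`. Conversely, writing `Bα = ⋃_{j ∈ D} 2ʲ O` with
`D = {j | j + 1 ∈ E}`, the progressions `2ʲ + (2ʲ⁺¹)` for `j ∈ D, j < N` together with `(2ᴺ)`
cover `Bα` at cost `∑_{j ∈ D, j < N} 2⁻ʲ⁻¹ + 2⁻ᴺ → α`, and the same construction with the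
complement of `D` covers `ℕ \ Bα` at cost tending to `1 - α`.
-/

open Finset Filter Topology

section Buck

variable {S : Set ℕ}

theorem buckDensity_le_of_subset_iUnion {ι : Type*} [Fintype ι] (r m : ι → ℕ)
    (hm : ∀ i, 0 < m i) (hS : S ⊆ ⋃ i, {n : ℕ | n ≡ r i [MOD m i]}) :
    buckDensity S ≤ ∑ i, (1 : ℝ) / m i := by
  let e := Fintype.equivFin ι
  refine csInf_le ⟨0, ?_⟩ ⟨Fintype.card ι, r ∘ e.symm, m ∘ e.symm, fun i => hm _, ?_, ?_⟩
  · rintro x ⟨k, r, m, -, -, rfl⟩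
    positivity
  · intro n hn
    obtain ⟨i, hi⟩ := Set.mem_iUnion.1 (hS hn)
    exact Set.mem_iUnion.2 ⟨e i, by simpa using hi⟩
  · exact (e.symm.sum_comp fun i => (1 : ℝ) / m i).symm

theorem le_buckDensity {a : ℝ}
    (h : ∀ (k : ℕ) (r m : Fin k → ℕ), (∀ i, 0 < m i) →
      S ⊆ ⋃ i, {n : ℕ | n ≡ r i [MOD m i]} → a ≤ ∑ i, (1 : ℝ) / m i) :
    a ≤ buckDensity S :=
  le_csInf ⟨1, 1, fun _ => 0, fun _ => 1, fun _ => one_pos,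
      fun _ _ => Set.mem_iUnion.2 ⟨0, Nat.modEq_one⟩, by simp⟩
    (by rintro x ⟨k, r, m, hm, hS, rfl⟩; exact h k r m hm hS)

theorem one_le_sum_of_forall_modEq {ι : Type*} [Fintype ι] (r m : ι → ℕ) (hm : ∀ i, 0 < m i)
    (hcov : ∀ n, ∃ i, n ≡ r i [MOD m i]) : 1 ≤ ∑ i, (1 : ℝ) / m i := by
  classical
  set M := ∏ i, m i
  have hM : 0 < M := prod_pos fun i _ => hm i
  have hdvd : ∀ i, m i ∣ M := fun i => dvd_prod_of_mem m (mem_univ i)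
  have hcount : ∀ i, #{n ∈ range M | n ≡ r i [MOD m i]} = M / m i := fun i => by
    rw [← Nat.count_eq_card_filter_range, Nat.count_modEq_card _ (hm i),
      Nat.mod_eq_zero_of_dvd (hdvd i)]
    simp
  have hcard : M ≤ ∑ i, M / m i := calc
    M = #(range M) := (card_range M).symm
    _ ≤ #(univ.biUnion fun i => {n ∈ range M | n ≡ r i [MOD m i]}) :=
      card_le_card fun n hn => by
        obtain ⟨i, hi⟩ := hcov n
        exact mem_biUnion.2 ⟨i, mem_univ i, mem_filter.2 ⟨hn, hi⟩⟩
    _ ≤ ∑ i, #{n ∈ range M | n ≡ r i [MOD m i]} := card_biUnion_le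
    _ = ∑ i, M / m i := by simp only [hcount]
  have hreal : (M : ℝ) * 1 ≤ M * ∑ i, (1 : ℝ) / m i := calc
    (M : ℝ) * 1 ≤ ((∑ i, M / m i : ℕ) : ℝ) := by rw [mul_one]; exact_mod_cast hcard
    _ = M * ∑ i, (1 : ℝ) / m i := by
      push_cast
      rw [mul_sum]
      refine sum_congr rfl fun i _ => ?_
      rw [Nat.cast_div (hdvd i) (by exact_mod_cast (hm i).ne'), mul_one_div]
  exact le_of_mul_le_mul_left hreal (by exact_mod_cast hM)

theorem one_le_buckDensity_add_compl (S : Set ℕ) : 1 ≤ buckDensity S + buckDensity Sᶜ := by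
  suffices 1 - buckDensity Sᶜ ≤ buckDensity S by linarith
  refine le_buckDensity fun k r m hm hS => ?_
  suffices 1 - ∑ i, (1 : ℝ) / m i ≤ buckDensity Sᶜ by linarith
  refine le_buckDensity fun k' r' m' hm' hS' => ?_
  have hcov : ∀ n, ∃ i, n ≡ Sum.elim r r' i [MOD Sum.elim m m' i] := fun n => by
    by_cases hn : n ∈ S
    · obtain ⟨i, hi⟩ := Set.mem_iUnion.1 (hS hn)
      exact ⟨Sum.inl i, hi⟩
    · obtain ⟨i, hi⟩ := Set.mem_iUnion.1 (hS' hn)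
      exact ⟨Sum.inr i, hi⟩
  have := one_le_sum_of_forall_modEq _ _ (Sum.forall.2 ⟨hm, hm'⟩) hcov
  rw [Fintype.sum_sum_type] at this
  simp only [Sum.elim_inl, Sum.elim_inr] at this
  linarith

theorem buckMeasurable_and_buckDensity_eq {a : ℝ} (h : buckDensity S ≤ a)
    (hc : buckDensity Sᶜ ≤ 1 - a) : BuckMeasurable S ∧ buckDensity S = a := by
  have := one_le_buckDensity_add_compl S
  exact ⟨by unfold BuckMeasurable; linarith, by linarith⟩

end Buck

theorem two_pow_mul_modEq_two_pow {m : ℕ} (hm : Odd m) (j : ℕ) :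
    2 ^ j * m ≡ 2 ^ j [MOD 2 ^ (j + 1)] := by
  rw [pow_succ]
  simpa using Nat.ModEq.mul_left' (2 ^ j) (show m ≡ 1 [MOD 2] from Nat.odd_iff.1 hm)

section Dyadic

variable {S : Set ℕ} (A : Set ℕ)

theorem buckDensity_le_of_subset_dyadic (N : ℕ)
    (hS : S ⊆ insert 0 (⋃ j ∈ A, (2 ^ j * ·) '' {m | Odd m})) :
    buckDensity S ≤ ∑ j ∈ range N, A.indicator (fun j => (1 : ℝ) / 2 ^ (j + 1)) j + 1 / 2 ^ N := by
  classical
  let F := {j ∈ range N | j ∈ A}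
  have hcov : S ⊆ ⋃ i : Option F, {n : ℕ | n ≡ i.elim 0 (fun j => 2 ^ (j : ℕ))
      [MOD i.elim (2 ^ N) (fun j => 2 ^ ((j : ℕ) + 1))]} := by
    intro n hn
    rcases hS hn with rfl | hn
    · exact Set.mem_iUnion.2 ⟨none, rfl⟩
    obtain ⟨j, hj, m, hm, rfl⟩ := Set.mem_iUnion₂.1 hn
    rcases lt_or_ge j N with hjN | hNj
    · exact Set.mem_iUnion.2 ⟨some ⟨j, mem_filter.2 ⟨mem_range.2 hjN, hj⟩⟩,
        two_pow_mul_modEq_two_pow hm j⟩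
    · exact Set.mem_iUnion.2
        ⟨none, Nat.modEq_zero_iff_dvd.2 ((pow_dvd_pow 2 hNj).mul_right m)⟩
  refine (buckDensity_le_of_subset_iUnion _ _
    (by rintro (_ | _) <;> exact Nat.pow_pos two_pos) hcov).trans_eq ?_
  simp only [Fintype.sum_option, Option.elim_none, Option.elim_some]
  rw [add_comm, sum_coe_sort F (fun j => (1 : ℝ) / (2 ^ (j + 1) : ℕ)), sum_filter]
  simp [Set.indicator_apply]

theorem buckDensity_le_of_hasSum_dyadic {a : ℝ}
    (ha : HasSum (A.indicator fun j => (1 : ℝ) / 2 ^ (j + 1)) a)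
    (hS : S ⊆ insert 0 (⋃ j ∈ A, (2 ^ j * ·) '' {m | Odd m})) : buckDensity S ≤ a := by
  have hpow : Tendsto (fun N : ℕ => (1 : ℝ) / 2 ^ N) atTop (𝓝 0) := by
    simpa only [one_div_pow] using
      tendsto_pow_atTop_nhds_zero_of_lt_one (by norm_num : (0 : ℝ) ≤ 1 / 2) (by norm_num)
  exact ge_of_tendsto' (by simpa using ha.tendsto_sum_nat.add hpow)
    fun N => buckDensity_le_of_subset_dyadic A N hS

end Dyadic

theorem stmt_3_general (α : ℝ)
    (E : Set ℕ) (hE : ∀ k ∈ E, 1 ≤ k)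
    (hsum : HasSum (fun k : E => (1 : ℝ) / 2 ^ (k : ℕ)) α) :
    BuckMeasurable (⋃ k ∈ E, (fun m => 2 ^ (k - 1) * m) '' {n : ℕ | Odd n}) ∧
      buckDensity (⋃ k ∈ E, (fun m => 2 ^ (k - 1) * m) '' {n : ℕ | Odd n}) = α := by
  set D := (· + 1) ⁻¹' E
  set f : ℕ → ℝ := fun j => 1 / 2 ^ (j + 1)
  have hD : HasSum (D.indicator f) α := by
    have hE0 : ∀ k ∉ Set.range (· + 1), E.indicator (fun k => (1 : ℝ) / 2 ^ k) k = 0 :=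
      fun k hk => Set.indicator_of_notMem (fun hkE => hk ⟨k - 1, Nat.sub_add_cancel (hE k hkE)⟩) _
    exact ((add_left_injective 1).hasSum_iff hE0).2 (hasSum_subtype_iff_indicator.1 hsum)
  have hDc : HasSum (Dᶜ.indicator f) (1 - α) := by
    rw [Set.indicator_compl]
    have hf : f = fun j => 1 / 2 / 2 ^ j := funext fun j => by simp only [f, pow_succ', div_div]
    exact (hf ▸ hasSum_geometric_two' 1).sub hD
  refine buckMeasurable_and_buckDensity_eq (buckDensity_le_of_hasSum_dyadic D hD ?_)
    (buckDensity_le_of_hasSum_dyadic Dᶜ hDc ?_)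
  · intro n hn
    obtain ⟨k, hk, m, hm, rfl⟩ := Set.mem_iUnion₂.1 hn
    refine Set.mem_insert_of_mem _ (Set.mem_iUnion₂.2 ⟨k - 1, ?_, m, hm, rfl⟩)
    show k - 1 + 1 ∈ E
    rwa [Nat.sub_add_cancel (hE k hk)]
  · intro n hn
    rcases eq_or_ne n 0 with rfl | hn0
    · exact Set.mem_insert 0 _
    obtain ⟨j, m, hm, rfl⟩ := Nat.exists_eq_two_pow_mul_odd hn0
    exact Set.mem_insert_of_mem _ (Set.mem_iUnion₂.2
      ⟨j, fun hj => hn (Set.mem_iUnion₂.2 ⟨j + 1, hj, m, hm, rfl⟩), m, hm, rfl⟩)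

theorem stmt_3 (α : ℝ) (hα : α ∈ Set.Ico (0 : ℝ) 1)
    (E : Set ℕ) (hE : ∀ k ∈ E, 1 ≤ k)
    (hsum : HasSum (fun k : E => (1 : ℝ) / 2 ^ (k : ℕ)) α) :
    BuckMeasurable (⋃ k ∈ E, (fun m => 2 ^ (k - 1) * m) '' {n : ℕ | Odd n}) ∧
      buckDensity (⋃ k ∈ E, (fun m => 2 ^ (k - 1) * m) '' {n : ℕ | Odd n}) = α :=
  stmt_3_general α E hE hsum
end

section
/- Let τ(n) denote the number of divisors of n ∈ ℕ, and let R = {n ∈ ℕ : τ(n) | n}. Then R is Buck measurable and μ(R) = 0. -/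
open scoped BigOperators

def coverSet (S : Set ℕ) : Set ℝ :=
  {x : ℝ | ∃ (k : ℕ) (r m : Fin k → ℕ), (∀ i, 0 < m i) ∧
    (S ⊆ ⋃ i, {n : ℕ | n ≡ r i [MOD m i]}) ∧ x = ∑ i, (1 : ℝ) / (m i)}

def Covers (S : Set ℕ) (c : ℝ) : Prop := ∃ x ∈ coverSet S, x ≤ c

lemma coverSet_nonneg {S : Set ℕ} {x : ℝ} (hx : x ∈ coverSet S) : 0 ≤ x := by
  obtain ⟨k, r, m, hm, hsub, rfl⟩ := hx
  exact Finset.sum_nonneg fun i _ => by positivity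

lemma coverSet_bddBelow (S : Set ℕ) : BddBelow (coverSet S) :=
  ⟨0, fun x hx => coverSet_nonneg hx⟩

lemma one_mem_coverSet (S : Set ℕ) : (1 : ℝ) ∈ coverSet S := by
  refine ⟨1, fun _ => 0, fun _ => 1, fun i => one_pos, ?_, by simp⟩
  intro n _
  exact Set.mem_iUnion.2 ⟨0, by simp [Nat.ModEq, Nat.mod_one]⟩

lemma coverSet_mono {S T : Set ℕ} (h : S ⊆ T) : coverSet T ⊆ coverSet S := by
  rintro x ⟨k, r, m, hm, hsub, rfl⟩
  exact ⟨k, r, m, hm, h.trans hsub, rfl⟩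

lemma Covers.mono {S T : Set ℕ} {c : ℝ} (h : S ⊆ T) (hc : Covers T c) : Covers S c := by
  obtain ⟨x, hx, hxc⟩ := hc
  exact ⟨x, coverSet_mono h hx, hxc⟩

lemma Covers.le {S : Set ℕ} {c d : ℝ} (hc : Covers S c) (hcd : c ≤ d) : Covers S d := by
  obtain ⟨x, hx, hxc⟩ := hc
  exact ⟨x, hx, hxc.trans hcd⟩

lemma covers_empty : Covers (∅ : Set ℕ) 0 := by
  refine ⟨0, ⟨0, fun i => 0, fun i => 1, fun i => i.elim0, by simp, by simp⟩, le_refl _⟩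

lemma Covers.union {S T : Set ℕ} {c d : ℝ} (hS : Covers S c) (hT : Covers T d) :
    Covers (S ∪ T) (c + d) := by
  obtain ⟨x, ⟨k1, r1, m1, hm1, hs1, rfl⟩, hxc⟩ := hS
  obtain ⟨y, ⟨k2, r2, m2, hm2, hs2, rfl⟩, hyd⟩ := hT
  refine ⟨_, ⟨k1 + k2, Fin.append r1 r2, Fin.append m1 m2, ?_, ?_, rfl⟩, ?_⟩
  · intro i
    refine Fin.addCases (fun j => ?_) (fun j => ?_) i
    · simpa [Fin.append_left] using hm1 j
    · simpa [Fin.append_right] using hm2 j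
  · rintro n (hn | hn)
    · obtain ⟨j, hj⟩ := Set.mem_iUnion.1 (hs1 hn)
      exact Set.mem_iUnion.2 ⟨Fin.castAdd k2 j, by simpa [Fin.append_left] using hj⟩
    · obtain ⟨j, hj⟩ := Set.mem_iUnion.1 (hs2 hn)
      exact Set.mem_iUnion.2 ⟨Fin.natAdd k1 j, by simpa [Fin.append_right] using hj⟩
  · rw [Fin.sum_univ_add]
    simp only [Fin.append_left, Fin.append_right]
    exact add_le_add hxc hyd

lemma covers_single (r M : ℕ) (hM : 0 < M) : Covers {n : ℕ | n ≡ r [MOD M]} ((1 : ℝ) / M) := by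
  refine ⟨(1 : ℝ) / M, ⟨1, fun _ => r, fun _ => M, fun _ => hM, ?_, by simp⟩, le_refl _⟩
  intro n hn
  exact Set.mem_iUnion.2 ⟨0, hn⟩

lemma covers_biUnion {ι : Type} [DecidableEq ι] (s : Finset ι) (S : ι → Set ℕ) (c : ι → ℝ)
    (h : ∀ i ∈ s, Covers (S i) (c i)) : Covers (⋃ i ∈ s, S i) (∑ i ∈ s, c i) := by
  classical
  induction s using Finset.induction_on with
  | empty => simpa using covers_empty
  | @insert a s ha ih =>
      rw [Finset.set_biUnion_insert, Finset.sum_insert ha]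
      exact (h a (Finset.mem_insert_self a s)).union
        (ih fun i hi => h i (Finset.mem_insert_of_mem hi))

lemma covers_of_residues (S : Set ℕ) (F : Finset ℕ) (M : ℕ) (hM : 0 < M)
    (h : S ⊆ ⋃ x ∈ F, {n : ℕ | n ≡ x [MOD M]}) : Covers S ((F.card : ℝ) / M) := by
  have h1 : Covers (⋃ x ∈ F, {n : ℕ | n ≡ x [MOD M]}) (∑ _x ∈ F, (1:ℝ)/M) :=
    covers_biUnion F _ _ fun x _ => covers_single x M hM
  refine (h1.mono h).le ?_
  rw [Finset.sum_const, nsmul_eq_mul]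
  ring_nf
  exact le_refl _

lemma card_filter_modeq (M m r : ℕ) (hm : 0 < m) (hdvd : m ∣ M) :
    ((Finset.range M).filter (fun x => x % m = r % m)).card = M / m := by
  have himg : (Finset.range M).filter (fun x => x % m = r % m)
      = (Finset.range (M / m)).image (fun j => r % m + m * j) := by
    ext x
    simp only [Finset.mem_filter, Finset.mem_range, Finset.mem_image]
    constructor
    · rintro ⟨hxM, hx⟩
      refine ⟨x / m, Nat.div_lt_div_of_lt_of_dvd hdvd hxM, ?_⟩
      rw [← hx]; exact Nat.mod_add_div x m
    · rintro ⟨j, hj, rfl⟩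
      refine ⟨?_, ?_⟩
      · calc r % m + m * j < m + m * j := by
              have := Nat.mod_lt r hm; omega
          _ = m * (j + 1) := by ring
          _ ≤ m * (M / m) := Nat.mul_le_mul_left m hj
          _ = M := Nat.mul_div_cancel' hdvd
      · rw [Nat.add_mul_mod_self_left, Nat.mod_mod_of_dvd _ dvd_rfl]
  rw [himg, Finset.card_image_of_injective _
      (fun a b hab => Nat.eq_of_mul_eq_mul_left hm (by omega)), Finset.card_range]

lemma coverSum_ge_one {k : ℕ} (r m : Fin k → ℕ) (hm : ∀ i, 0 < m i)
    (hsub : (Set.univ : Set ℕ) ⊆ ⋃ i, {n : ℕ | n ≡ r i [MOD m i]}) :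
    1 ≤ ∑ i, (1 : ℝ) / (m i) := by
  classical
  set M := ∏ i : Fin k, m i with hMdef
  have hM : 0 < M := Finset.prod_pos fun i _ => hm i
  have hdvd : ∀ i, m i ∣ M := fun i => Finset.dvd_prod_of_mem m (Finset.mem_univ i)
  have hcover : Finset.range M ⊆ Finset.univ.biUnion
      (fun i => (Finset.range M).filter (fun x => x % (m i) = (r i) % (m i))) := by
    intro x hx
    obtain ⟨i, hi⟩ := Set.mem_iUnion.1 (hsub (Set.mem_univ x))
    exact Finset.mem_biUnion.2 ⟨i, Finset.mem_univ i, Finset.mem_filter.2 ⟨hx, hi⟩⟩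
  have hcard : M ≤ ∑ i : Fin k, M / m i := by
    calc M = (Finset.range M).card := (Finset.card_range M).symm
      _ ≤ _ := Finset.card_le_card hcover
      _ ≤ ∑ i : Fin k, ((Finset.range M).filter (fun x => x % (m i) = (r i) % (m i))).card :=
          Finset.card_biUnion_le
      _ = ∑ i : Fin k, M / m i := Finset.sum_congr rfl fun i _ =>
          card_filter_modeq M (m i) (r i) (hm i) (hdvd i)
  have h2 : (M : ℝ) ≤ ∑ i, (M : ℝ) * (1 / m i) := by
    calc (M : ℝ) ≤ ((∑ i : Fin k, M / m i : ℕ) : ℝ) := by exact_mod_cast hcard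
      _ = ∑ i, ((M / m i : ℕ) : ℝ) := Nat.cast_sum _ _
      _ = ∑ i, (M : ℝ) * (1 / m i) := Finset.sum_congr rfl fun i _ => by
          rw [Nat.cast_div (hdvd i) (by exact_mod_cast (hm i).ne')]
          ring
  rw [← Finset.mul_sum] at h2
  have hMpos : (0 : ℝ) < M := by exact_mod_cast hM
  nlinarith

def goodSet (G : Finset ℕ) : Set ℕ := {n | ∀ p ∈ G, p ∣ n → p ^ 2 ∣ n}

lemma cardA_le (p : ℕ) (hp : p.Prime) :
    ((((Finset.range (p ^ 2)).filter (fun y => p ∣ y → p ^ 2 ∣ y)).card : ℝ))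
      ≤ (p : ℝ) ^ 2 * (1 - 1 / (2 * p)) := by
  classical
  have hppos : 0 < p := hp.pos
  have hbad : (Finset.Ico 1 p).image (fun j => p * j)
      ⊆ (Finset.range (p ^ 2)).filter (fun y => ¬(p ∣ y → p ^ 2 ∣ y)) := by
    intro y hy
    obtain ⟨j, hj, rfl⟩ := Finset.mem_image.1 hy
    rw [Finset.mem_Ico] at hj
    refine Finset.mem_filter.2 ⟨Finset.mem_range.2 ?_, ?_⟩
    · have : p * j < p * p := by
        have := hj.2; nlinarith
      nlinarith
    · intro h
      have h2 : p ^ 2 ∣ p * j := h (Dvd.intro j rfl)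
      have : p ∣ j := by
        rcases h2 with ⟨t, ht⟩
        refine ⟨t, Nat.eq_of_mul_eq_mul_left hppos ?_⟩
        rw [ht]; ring
      have := Nat.le_of_dvd (by omega) this
      omega
  have hbadcard : p - 1 ≤ ((Finset.range (p ^ 2)).filter (fun y => ¬(p ∣ y → p ^ 2 ∣ y))).card := by
    have := Finset.card_le_card hbad
    rwa [Finset.card_image_of_injective _ (fun a b hab => Nat.eq_of_mul_eq_mul_left hppos hab),
      Nat.card_Ico] at this
  have hsum : ((Finset.range (p ^ 2)).filter (fun y => p ∣ y → p ^ 2 ∣ y)).card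
      + ((Finset.range (p ^ 2)).filter (fun y => ¬(p ∣ y → p ^ 2 ∣ y))).card = p ^ 2 := by
    rw [Finset.card_filter_add_card_filter_not, Finset.card_range]
  have hnat : ((Finset.range (p ^ 2)).filter (fun y => p ∣ y → p ^ 2 ∣ y)).card + (p - 1) ≤ p ^ 2 := by omega
  have hreal : (((Finset.range (p ^ 2)).filter (fun y => p ∣ y → p ^ 2 ∣ y)).card : ℝ)
      ≤ (p : ℝ) ^ 2 - ((p : ℝ) - 1) := by
    have h2 := (Nat.cast_le (α := ℝ)).2 hnat
    push_cast [Nat.cast_sub (by omega : 1 ≤ p)] at h2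
    linarith
  have hp2 : (2 : ℝ) ≤ p := by exact_mod_cast hp.two_le
  have hppos' : (0 : ℝ) < p := by positivity
  refine hreal.trans ?_
  have : (p:ℝ)^2 * (1 - 1/(2*p)) = (p:ℝ)^2 - p/2 := by field_simp
  rw [this]; linarith

lemma goodSet_covers (G : Finset ℕ) (hG : ∀ p ∈ G, p.Prime) :
    Covers (goodSet G) (∏ p ∈ G, (1 - 1 / (2 * (p : ℝ)))) := by
  classical
  set M := ∏ p ∈ G, p ^ 2 with hMdef
  have hppos : ∀ p ∈ G, 0 < p := fun p hp => (hG p hp).pos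
  have hM : 0 < M := Finset.prod_pos fun p hp => pow_pos (hppos p hp) 2
  have hp2M : ∀ p ∈ G, p ^ 2 ∣ M := fun p hp => Finset.dvd_prod_of_mem _ hp
  set F := (Finset.range M).filter (fun x => ∀ p ∈ G, p ∣ x → p ^ 2 ∣ x) with hF
  have hsub : goodSet G ⊆ ⋃ x ∈ F, {n : ℕ | n ≡ x [MOD M]} := by
    intro n hn
    have hxF : n % M ∈ F := by
      refine Finset.mem_filter.2 ⟨Finset.mem_range.2 (Nat.mod_lt n hM), ?_⟩
      intro p hp hpd
      have hmod : n % M ≡ n [MOD p ^ 2] := (Nat.mod_modEq n M).of_dvd (hp2M p hp)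
      have hpn : p ∣ n := (hmod.dvd_iff (dvd_pow_self p two_ne_zero)).1 hpd
      exact (hmod.dvd_iff dvd_rfl).2 (hn p hp hpn)
    refine Set.mem_iUnion₂.2 ⟨n % M, hxF, (Nat.mod_modEq n M).symm⟩
  -- cardinality bound via CRT injectivity
  have hcard : F.card ≤ ∏ p ∈ G, ((Finset.range (p ^ 2)).filter (fun y => p ∣ y → p ^ 2 ∣ y)).card := by
    rw [← Finset.card_pi]
    refine Finset.card_le_card_of_injOn (fun x => fun p _ => x % p ^ 2) ?_ ?_
    · intro x hx
      obtain ⟨hxM, hxg⟩ := Finset.mem_filter.1 hx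
      refine Finset.mem_pi.2 fun p hp => Finset.mem_filter.2 ⟨?_, ?_⟩
      · exact Finset.mem_range.2 (Nat.mod_lt x (pow_pos (hppos p hp) 2))
      · intro hpd
        have hmod : x % p ^ 2 ≡ x [MOD p ^ 2] := Nat.mod_modEq x (p ^ 2)
        have hpx : p ∣ x := (hmod.dvd_iff (dvd_pow_self p two_ne_zero)).1 hpd
        exact (hmod.dvd_iff dvd_rfl).2 (hxg p hp hpx)
    · intro x hx y hy hxy
      have hmods : ∀ p ∈ G, x ≡ y [MOD p ^ 2] := by
        intro p hp
        have := congrFun (congrFun hxy p) hp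
        simpa [Nat.ModEq] using this
      have hdvd : ((M : ℤ)) ∣ (y : ℤ) - (x : ℤ) := by
        have : ∏ p ∈ G, ((p : ℤ) ^ 2) ∣ (y : ℤ) - (x : ℤ) := by
          refine Finset.prod_dvd_of_coprime ?_ ?_
          · intro p hp q hq hpq
            have : Nat.Coprime (p ^ 2) (q ^ 2) :=
              Nat.Coprime.pow _ _ ((Nat.coprime_primes (hG p hp) (hG q hq)).2 hpq)
            have := Nat.isCoprime_iff_coprime.2 this
            simpa [Function.onFun] using this
          · intro p hp
            have := (hmods p hp).dvd
            simpa using this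
        simpa [hMdef] using this
      have hmodM : x ≡ y [MOD M] := (Nat.modEq_iff_dvd).2 hdvd
      have hx' : x < M := Finset.mem_range.1 (Finset.mem_filter.1 hx).1
      have hy' : y < M := Finset.mem_range.1 (Finset.mem_filter.1 hy).1
      have : x % M = y % M := hmodM
      rwa [Nat.mod_eq_of_lt hx', Nat.mod_eq_of_lt hy'] at this
  -- put it together
  have hcov := covers_of_residues _ F M hM hsub
  refine hcov.le ?_
  have hMr : (M : ℝ) = ∏ p ∈ G, ((p : ℝ) ^ 2) := by
    rw [hMdef]; push_cast; rfl
  have h1 : (F.card : ℝ) ≤ ∏ p ∈ G, (((Finset.range (p ^ 2)).filter (fun y => p ∣ y → p ^ 2 ∣ y)).card : ℝ) := by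
    rw [← Nat.cast_prod]
    exact_mod_cast hcard
  have hMpos : (0 : ℝ) < M := by exact_mod_cast hM
  rw [div_le_iff₀ hMpos]
  calc (F.card : ℝ)
      ≤ ∏ p ∈ G, (((Finset.range (p ^ 2)).filter (fun y => p ∣ y → p ^ 2 ∣ y)).card : ℝ) := h1
    _ ≤ ∏ p ∈ G, ((p : ℝ) ^ 2 * (1 - 1 / (2 * p))) := by
        refine Finset.prod_le_prod (fun p _ => by positivity) (fun p hp => cardA_le p (hG p hp))
    _ = (∏ p ∈ G, (1 - 1 / (2 * (p : ℝ)))) * M := by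
        rw [Finset.prod_mul_distrib, hMr]; ring

lemma prod_one_sub_le (G : Finset ℕ) (f : ℕ → ℝ) (h0 : ∀ p ∈ G, 0 ≤ f p)
    (h1 : ∀ p ∈ G, f p < 1) :
    ∏ p ∈ G, (1 - f p) ≤ 1 / (1 + ∑ p ∈ G, f p) := by
  classical
  induction G using Finset.induction_on with
  | empty => simp
  | @insert a s ha ih =>
      have h0' : ∀ p ∈ s, 0 ≤ f p := fun p hp => h0 p (Finset.mem_insert_of_mem hp)
      have h1' : ∀ p ∈ s, f p < 1 := fun p hp => h1 p (Finset.mem_insert_of_mem hp)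
      have hS : 0 ≤ ∑ p ∈ s, f p := Finset.sum_nonneg h0'
      have ha0 : 0 ≤ f a := h0 a (Finset.mem_insert_self a s)
      have ha1 : f a < 1 := h1 a (Finset.mem_insert_self a s)
      rw [Finset.prod_insert ha, Finset.sum_insert ha]
      calc (1 - f a) * ∏ p ∈ s, (1 - f p)
          ≤ (1 - f a) * (1 / (1 + ∑ p ∈ s, f p)) := by
            refine mul_le_mul_of_nonneg_left (ih h0' h1') (by linarith)
        _ ≤ 1 / (1 + (f a + ∑ p ∈ s, f p)) := by
            rw [mul_one_div, div_le_div_iff₀ (by linarith) (by linarith)]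
            nlinarith

lemma exists_primes_sum (N : ℕ) (C : ℝ) :
    ∃ G : Finset ℕ, (∀ p ∈ G, p.Prime ∧ N < p) ∧ C < ∑ p ∈ G, (1 : ℝ) / p := by
  classical
  set f : ℕ → ℝ := Set.indicator {p | p.Prime} (fun n => (1 : ℝ) / n) with hf
  have hf0 : ∀ n, 0 ≤ f n := fun n => Set.indicator_nonneg (fun a _ => by positivity) n
  have htend : Filter.Tendsto (fun n => ∑ i ∈ Finset.range n, f i) Filter.atTop Filter.atTop :=
    (not_summable_iff_tendsto_nat_atTop_of_nonneg hf0).1 not_summable_one_div_on_primes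
  obtain ⟨n, hn⟩ := (htend.eventually_gt_atTop (C + ∑ i ∈ Finset.range (N + 1), f i)).exists
  refine ⟨(Finset.range n).filter (fun p => p.Prime ∧ N < p),
    fun p hp => (Finset.mem_filter.1 hp).2, ?_⟩
  have hsplit := Finset.sum_filter_add_sum_filter_not (Finset.range n)
    (fun p => p.Prime ∧ N < p) f
  have hrest : ∑ i ∈ (Finset.range n).filter (fun p => ¬(p.Prime ∧ N < p)), f i
      ≤ ∑ i ∈ Finset.range (N + 1), f i := by
    rw [← Finset.sum_filter_of_ne
      (s := (Finset.range n).filter (fun p => ¬(p.Prime ∧ N < p))) (p := fun p => p.Prime)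
      (f := f) (by
        intro x _ hx
        by_contra hnp
        exact hx (Set.indicator_of_notMem hnp _))]
    refine Finset.sum_le_sum_of_subset_of_nonneg ?_ (fun i _ _ => hf0 i)
    intro x hx
    simp only [Finset.mem_filter, Finset.mem_range] at hx ⊢
    rcases hx with ⟨⟨_, hcond⟩, hprime⟩
    push_neg at hcond
    exact Nat.lt_succ_of_le (hcond hprime)
  have heq : ∑ p ∈ (Finset.range n).filter (fun p => p.Prime ∧ N < p), f p
      = ∑ p ∈ (Finset.range n).filter (fun p => p.Prime ∧ N < p), (1 : ℝ) / p := by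
    refine Finset.sum_congr rfl fun p hp => ?_
    exact Set.indicator_of_mem ((Finset.mem_filter.1 hp).2.1) _
  linarith [hsplit, hrest, hn, heq]

lemma exists_groups (K : ℕ) (C : ℝ) :
    ∃ G : Fin K → Finset ℕ, (∀ t, ∀ p ∈ G t, p.Prime ∧ 2 < p) ∧
      (∀ t₁ t₂, t₁ ≠ t₂ → Disjoint (G t₁) (G t₂)) ∧
      (∀ t, C < ∑ p ∈ G t, (1 : ℝ) / p) := by
  classical
  induction K with
  | zero => exact ⟨fun t => t.elim0, fun t => t.elim0, fun t => t.elim0, fun t => t.elim0⟩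
  | succ K ih =>
      obtain ⟨G, hG1, hG2, hG3⟩ := ih
      set N : ℕ := 2 + Finset.univ.sup (fun t : Fin K => (G t).sup id) with hN
      obtain ⟨G', hG'1, hG'2⟩ := exists_primes_sum N C
      have hbig : ∀ p ∈ G', ∀ t, p ∉ G t := by
        intro p hp t hpt
        have h1 : p ≤ (G t).sup id := Finset.le_sup (f := id) hpt
        have h2 : (G t).sup id ≤ Finset.univ.sup (fun t : Fin K => (G t).sup id) :=
          Finset.le_sup (f := fun t : Fin K => (G t).sup id) (Finset.mem_univ t)
        have := (hG'1 p hp).2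
        omega
      refine ⟨fun t => if h : t = 0 then G' else G (t.pred h), ?_, ?_, ?_⟩
      · intro t p hp
        by_cases h : t = 0
        · simp only [h, dif_pos] at hp
          have := hG'1 p hp
          exact ⟨this.1, by omega⟩
        · simp only [dif_neg h] at hp
          exact hG1 _ p hp
      · intro t₁ t₂ hne
        by_cases h1 : t₁ = 0 <;> by_cases h2 : t₂ = 0
        · exact absurd (h1.trans h2.symm) hne
        · simp only [dif_pos h1, dif_neg h2]
          exact Finset.disjoint_left.2 fun p hp hpj => hbig p hp _ hpj
        · simp only [dif_pos h2, dif_neg h1]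
          exact Finset.disjoint_right.2 fun p hp hpj => hbig p hp _ hpj
        · simp only [dif_neg h1, dif_neg h2]
          refine hG2 _ _ fun h => hne ?_
          rw [← Fin.succ_pred t₁ h1, ← Fin.succ_pred t₂ h2, h]
      · intro t
        by_cases h : t = 0
        · simpa [h] using hG'2
        · simpa [dif_neg h] using hG3 (t.pred h)

lemma badset_card_lt (n K : ℕ) (hn : n ≠ 0) (hd : n.divisors.card ∣ n) (h2 : ¬ 2 ^ K ∣ n) :
    (n.primeFactors.filter (fun p => p ≠ 2 ∧ n.factorization p = 1)).card < K := by
  classical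
  set B := n.primeFactors.filter (fun p => p ≠ 2 ∧ n.factorization p = 1) with hB
  have h1 : 2 ^ B.card ∣ n.divisors.card := by
    rw [Nat.card_divisors hn]
    calc (2 : ℕ) ^ B.card = ∏ _p ∈ B, 2 := by rw [Finset.prod_const]
      _ = ∏ p ∈ B, (n.factorization p + 1) := Finset.prod_congr rfl (fun p hp => by
          have := (Finset.mem_filter.1 hp).2.2
          omega)
      _ ∣ ∏ p ∈ n.primeFactors, (n.factorization p + 1) :=
          Finset.prod_dvd_prod_of_subset _ _ _ (Finset.filter_subset _ _)
  have h2' : 2 ^ B.card ∣ n := h1.trans hd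
  have h3 : B.card ≤ n.factorization 2 :=
    (Nat.Prime.pow_dvd_iff_le_factorization Nat.prime_two hn).1 h2'
  have h4 : n.factorization 2 < K := by
    by_contra h
    push_neg at h
    exact h2 ((Nat.Prime.pow_dvd_iff_le_factorization Nat.prime_two hn).2 h)
  omega

lemma mem_goodSet_of (n : ℕ) (hn : n ≠ 0) (G : Finset ℕ) (hG : ∀ p ∈ G, p.Prime ∧ 2 < p)
    (hB : ∀ p ∈ G, p ∉ n.primeFactors.filter (fun p => p ≠ 2 ∧ n.factorization p = 1)) :
    ∀ p ∈ G, p ∣ n → p ^ 2 ∣ n := by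
  intro p hp hpn
  obtain ⟨hprime, hodd⟩ := hG p hp
  have hmem : p ∈ n.primeFactors := Nat.mem_primeFactors.2 ⟨hprime, hpn, hn⟩
  have hnot := hB p hp
  simp only [Finset.mem_filter, hmem, true_and, not_and] at hnot
  have hne2 : p ≠ 2 := by omega
  have h1 : 1 ≤ n.factorization p := (Nat.Prime.dvd_iff_one_le_factorization hprime hn).1 hpn
  have h2 : 2 ≤ n.factorization p := by
    have := hnot hne2
    omega
  exact (Nat.Prime.pow_dvd_iff_le_factorization hprime hn).2 h2

lemma exists_good_group {K : ℕ} (B : Finset ℕ) (G : Fin K → Finset ℕ)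
    (hdis : ∀ t₁ t₂, t₁ ≠ t₂ → Disjoint (G t₁) (G t₂)) (hcard : B.card < K) :
    ∃ t, ∀ p ∈ G t, p ∉ B := by
  classical
  by_contra h
  push_neg at h
  choose f hf1 hf2 using h
  have hinj : Function.Injective f := by
    intro t₁ t₂ he
    by_contra hne
    exact (Finset.disjoint_left.1 (hdis t₁ t₂ hne)) (hf1 t₁) (he ▸ hf1 t₂)
  have : K ≤ B.card := by
    have := Finset.card_le_card_of_injOn (s := (Finset.univ : Finset (Fin K))) (t := B) f
      (fun t _ => hf2 t) (fun t₁ _ t₂ _ he => hinj he)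
    simpa using this
  omega

lemma covers_R {ε : ℝ} (hε : 0 < ε) : Covers {n : ℕ | n.divisors.card ∣ n} ε := by
  classical
  obtain ⟨K, hK⟩ := exists_pow_lt_of_lt_one (half_pos hε) (by norm_num : (1:ℝ)/2 < 1)
  set C : ℝ := 4 * (K + 1) / ε with hC
  have hCpos : 0 < C := by positivity
  obtain ⟨G, hG1, hG2, hG3⟩ := exists_groups K C
  have hcov2 : Covers {n : ℕ | n ≡ 0 [MOD 2 ^ K]} ((1:ℝ)/(2 ^ K : ℕ)) :=
    covers_single 0 (2 ^ K) (pow_pos two_pos K)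
  have hcovU : Covers (⋃ t ∈ (Finset.univ : Finset (Fin K)), goodSet (G t))
      (∑ t : Fin K, ∏ p ∈ G t, (1 - 1 / (2 * (p : ℝ)))) :=
    covers_biUnion _ _ _ (fun t _ => goodSet_covers (G t) (fun p hp => (hG1 t p hp).1))
  have hsubset : {n : ℕ | n.divisors.card ∣ n} ⊆
      {n : ℕ | n ≡ 0 [MOD 2 ^ K]} ∪ ⋃ t ∈ (Finset.univ : Finset (Fin K)), goodSet (G t) := by
    intro n hn
    by_cases h2K : 2 ^ K ∣ n
    · exact Or.inl (Nat.modEq_zero_iff_dvd.2 h2K)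
    · have hn0 : n ≠ 0 := by rintro rfl; exact h2K (dvd_zero _)
      have hBcard := badset_card_lt n K hn0 hn h2K
      obtain ⟨t, ht⟩ := exists_good_group _ G hG2 hBcard
      refine Or.inr (Set.mem_iUnion₂.2 ⟨t, Finset.mem_univ t, ?_⟩)
      exact mem_goodSet_of n hn0 (G t) (hG1 t) ht
  refine (((hcov2.union hcovU).mono hsubset)).le ?_
  -- arithmetic
  have hterm : ∀ t : Fin K, ∏ p ∈ G t, (1 - 1 / (2 * (p : ℝ))) ≤ ε / (2 * (K + 1)) := by
    intro t
    have h0 : ∀ p ∈ G t, 0 ≤ 1 / (2 * (p : ℝ)) := by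
      intro p hp; positivity
    have h1 : ∀ p ∈ G t, 1 / (2 * (p : ℝ)) < 1 := by
      intro p hp
      have hp2 : (2:ℝ) < p := by exact_mod_cast (hG1 t p hp).2
      rw [div_lt_one (by linarith)]
      linarith
    have hple := prod_one_sub_le (G t) _ h0 h1
    have hsum : ∑ p ∈ G t, 1 / (2 * (p : ℝ)) = (∑ p ∈ G t, (1:ℝ)/p) / 2 := by
      rw [Finset.sum_div]
      refine Finset.sum_congr rfl fun p _ => by ring
    have hCsum : C / 2 < ∑ p ∈ G t, 1 / (2 * (p : ℝ)) := by
      rw [hsum]; linarith [hG3 t]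
    have hsumpos : (0:ℝ) ≤ ∑ p ∈ G t, 1 / (2 * (p : ℝ)) := Finset.sum_nonneg h0
    refine hple.trans ?_
    rw [div_le_div_iff₀ (by linarith) (by positivity)]
    have hCe : C * ε = 4 * ((K:ℝ) + 1) := by
      rw [hC]; field_simp
    nlinarith [hCsum, hε, hCe]
  have hsumK : ∑ t : Fin K, ∏ p ∈ G t, (1 - 1 / (2 * (p : ℝ))) ≤ ε / 2 := by
    calc ∑ t : Fin K, ∏ p ∈ G t, (1 - 1 / (2 * (p : ℝ)))
        ≤ ∑ _t : Fin K, ε / (2 * ((K:ℝ) + 1)) := Finset.sum_le_sum fun t _ => hterm t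
      _ = K * (ε / (2 * ((K:ℝ) + 1))) := by
          rw [Finset.sum_const, Finset.card_univ, Fintype.card_fin, nsmul_eq_mul]
      _ ≤ ε / 2 := by
          have hKnn : (0:ℝ) ≤ (K:ℝ) := by positivity
          rw [← mul_div_assoc, div_le_div_iff₀ (by positivity : (0:ℝ) < 2 * ((K:ℝ)+1))
            (by norm_num : (0:ℝ) < 2)]
          nlinarith [hε, hKnn]
  have h2K : (1:ℝ)/(2 ^ K : ℕ) < ε / 2 := by
    have : ((1:ℝ)/2) ^ K = 1/(2 ^ K : ℕ) := by
      push_cast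
      rw [div_pow, one_pow]
    linarith [hK, this ▸ hK]
  linarith [hsumK, h2K]

lemma buckDensity_le_of_covers {S : Set ℕ} {c : ℝ} (h : Covers S c) : buckDensity S ≤ c := by
  obtain ⟨x, hx, hxc⟩ := h
  exact le_trans (csInf_le (coverSet_bddBelow S) hx) hxc

lemma buckDensity_nonneg (S : Set ℕ) : 0 ≤ buckDensity S :=
  le_csInf ⟨1, one_mem_coverSet S⟩ fun _x hx => coverSet_nonneg hx

lemma one_le_of_covers_univ {c : ℝ} (h : Covers Set.univ c) : 1 ≤ c := by
  obtain ⟨x, ⟨k, r, m, hm, hsub, rfl⟩, hxc⟩ := h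
  exact (coverSum_ge_one r m hm hsub).trans hxc

lemma le_of_forall_pos' {a b : ℝ} (h : ∀ ε : ℝ, 0 < ε → a ≤ b + ε) : a ≤ b := by
  by_contra hc
  push_neg at hc
  have := h ((a - b) / 2) (by linarith)
  linarith

theorem stmt_13 :
    BuckMeasurable {n : ℕ | n.divisors.card ∣ n} ∧
      buckDensity {n : ℕ | n.divisors.card ∣ n} = 0 := by
  have hzero : buckDensity {n : ℕ | n.divisors.card ∣ n} = 0 := by
    refine le_antisymm ?_ (buckDensity_nonneg _)
    refine le_of_forall_pos' fun ε hε => ?_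
    have := buckDensity_le_of_covers (covers_R hε)
    linarith
  have hcompl : buckDensity {n : ℕ | n.divisors.card ∣ n}ᶜ = 1 := by
    refine le_antisymm (csInf_le (coverSet_bddBelow _) (one_mem_coverSet _)) ?_
    refine le_csInf ⟨1, one_mem_coverSet _⟩ fun x hx => ?_
    refine le_of_forall_pos' fun ε hε => ?_
    have h1 : Covers {n : ℕ | n.divisors.card ∣ n}ᶜ x := ⟨x, hx, le_refl x⟩
    have h3 : Covers Set.univ (x + ε) :=
      (h1.union (covers_R hε)).mono (Set.compl_union_self _).ge
    exact one_le_of_covers_univ h3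
  exact ⟨by rw [BuckMeasurable, hzero, hcompl]; ring, hzero⟩
end
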